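/- arXiv:0708.4343 — 9 statements merged into one kernel-verified Lean document; each statement's English description precedes it below -/
import Mathlib

section
/- Let f : ℝ → ℝ be a nonnegative influence function whose support is an interval containing 0, and suppose f satisfies the ratio condition: for all a ≤ b and c ≥ 0 with f(a), f(b), f(a+c), f(b+c) all positive, f(a+c)/f(a) ≥ f(b+c)/f(b). Then for any finite family of opinions x : Fin n → ℝ and any indices p, q with x p ≤ x q such that the denominators ∑ i, f(x i − x p) and ∑ i, f(x i − x q) are positive, the updated opinions satisfy (∑ i, f(x i − x p) * x i) / (∑ i, f(x i − x p)) ≤ (∑ i, f(x i − x q) * x i) / (∑ i, f(x i − x q)). -/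
lemma krause_double_sum_expand (n : ℕ) (u v x : Fin n → ℝ) :
    ∑ i, ∑ j, (u i * v j - u j * v i) * (x j - x i)
      = 2 * ((∑ i, v i * x i) * (∑ i, u i) - (∑ i, u i * x i) * (∑ i, v i)) := by
  have inner : ∀ i, ∑ j, (u i * v j - u j * v i) * (x j - x i)
      = u i * (∑ j, v j * x j) - (u i * x i) * (∑ j, v j)
        - v i * (∑ j, u j * x j) + (v i * x i) * (∑ j, u j) := by
    intro i
    rw [Finset.mul_sum, Finset.mul_sum, Finset.mul_sum, Finset.mul_sum,
      ← Finset.sum_sub_distrib, ← Finset.sum_sub_distrib, ← Finset.sum_add_distrib]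
    exact Finset.sum_congr rfl fun j _ => by ring
  rw [Finset.sum_congr rfl fun i _ => inner i]
  rw [Finset.sum_add_distrib, Finset.sum_sub_distrib, Finset.sum_sub_distrib,
    ← Finset.sum_mul, ← Finset.sum_mul, ← Finset.sum_mul, ← Finset.sum_mul]
  ring

/-- If an influence function satisfies the ratio condition, the Krause-type
update preserves the opinion order (when both denominators are positive). -/
theorem krause_order_preserved
    (f : ℝ → ℝ) (hf : ∀ y, 0 ≤ f y)
    (hord : Set.OrdConnected {y | 0 < f y}) (h0 : 0 < f 0)
    (hlen : ∃ y, y ≠ 0 ∧ 0 < f y)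
    (hratio : ∀ a b c : ℝ, a ≤ b → 0 ≤ c → 0 < f a → 0 < f b →
      0 < f (a + c) → 0 < f (b + c) → f (b + c) * f a ≤ f (a + c) * f b)
    (n : ℕ) (x : Fin n → ℝ) (p q : Fin n) (hpq : x p ≤ x q)
    (hdp : 0 < ∑ i, f (x i - x p)) (hdq : 0 < ∑ i, f (x i - x q)) :
    (∑ i, f (x i - x p) * x i) / (∑ i, f (x i - x p)) ≤
      (∑ i, f (x i - x q) * x i) / (∑ i, f (x i - x q)) := by
  set u : Fin n → ℝ := fun i => f (x i - x p) with hu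
  set v : Fin n → ℝ := fun i => f (x i - x q) with hv
  -- key extended ratio inequality
  have key : ∀ a b c : ℝ, a ≤ b → 0 ≤ c → f (b + c) * f a ≤ f (a + c) * f b := by
    intro a b c hab hc
    by_cases ha : 0 < f a
    · by_cases hbc : 0 < f (b + c)
      · have hmem : ∀ z, a ≤ z → z ≤ b + c → 0 < f z := fun z h1 h2 =>
          hord.out ha hbc ⟨h1, h2⟩
        have hac : 0 < f (a + c) := hmem _ (le_add_of_nonneg_right hc) (by linarith)
        have hb : 0 < f b := hmem _ hab (le_add_of_nonneg_right hc)
        exact hratio a b c hab hc ha hb hac hbc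
      · have hz : f (b + c) = 0 := le_antisymm (not_lt.mp hbc) (hf _)
        rw [hz, zero_mul]; exact mul_nonneg (hf _) (hf _)
    · have hz : f a = 0 := le_antisymm (not_lt.mp ha) (hf _)
      rw [hz, mul_zero]; exact mul_nonneg (hf _) (hf _)
  have pair : ∀ i j, x i ≤ x j → u j * v i ≤ u i * v j := by
    intro i j hij
    have h := key (x i - x q) (x j - x q) (x q - x p) (by linarith) (by linarith)
    have e1 : x j - x q + (x q - x p) = x j - x p := by ring
    have e2 : x i - x q + (x q - x p) = x i - x p := by ring
    rw [e1, e2] at h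
    simpa [hu, hv] using h
  have termpos : ∀ i j, 0 ≤ (u i * v j - u j * v i) * (x j - x i) := by
    intro i j
    rcases le_total (x i) (x j) with h | h
    · exact mul_nonneg (sub_nonneg.mpr (pair i j h)) (sub_nonneg.mpr h)
    · exact mul_nonneg_of_nonpos_of_nonpos (sub_nonpos.mpr (pair j i h)) (sub_nonpos.mpr h)
  have sumpos : 0 ≤ ∑ i, ∑ j, (u i * v j - u j * v i) * (x j - x i) :=
    Finset.sum_nonneg fun i _ => Finset.sum_nonneg fun j _ => termpos i j
  have expand := krause_double_sum_expand n u v x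
  rw [expand] at sumpos
  rw [div_le_div_iff₀ hdp hdq]
  nlinarith [sumpos]
end

section
/- Let f : ℝ → ℝ be a nonnegative influence function whose support is an interval containing 0, and suppose there exist a ≤ b and c > 0 with f(a), f(b), f(a+c), f(b+c) all positive and f(a)/f(a+c) > f(b)/f(b+c). Then f is not order preserving: there exist n, a vector x : Fin n → ℝ, and indices i, j with x i ≤ x j, all denominators positive, such that the updated opinions satisfy x_i' > x_j'. -/
/-!
Place agents `i` and `j` at `0` and `b - a`, and a crowd of `m` agents at each of `b` and
`b + c`; agent `i` sees the crowd at offsets `b, b + c`, agent `j` at offsets `a, a + c`.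
As `m → ∞` the crowd dominates, so the updates of `i` and `j` tend to the means of `b` and
`b + c` with weights `(f b, f (b + c))` and `(f a, f (a + c))`. The ratio violation gives the
second point more relative weight for `i` than for `j`, so for large `m` agent `i` ends up
strictly to the right of agent `j`.
-/

open Filter Topology

noncomputable def krauseUpdate {n : ℕ} (f : ℝ → ℝ) (x : Fin n → ℝ) (i : Fin n) : ℝ :=
  (∑ k, f (x k - x i) * x k) / ∑ k, f (x k - x i)

lemma tendsto_natCast_mul_add_div_natCast_mul_add {Q : ℝ} (hQ : Q ≠ 0) (U R P : ℝ) :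
    Tendsto (fun m : ℕ => (m * U + R) / (m * Q + P)) atTop (𝓝 (U / Q)) := by
  have hinv : Tendsto (fun m : ℕ => (m : ℝ)⁻¹) atTop (𝓝 0) :=
    tendsto_inv_atTop_zero.comp tendsto_natCast_atTop_atTop
  have hlim : Tendsto (fun m : ℕ => (U + R * (m : ℝ)⁻¹) / (Q + P * (m : ℝ)⁻¹)) atTop
      (𝓝 ((U + R * 0) / (Q + P * 0))) :=
    (tendsto_const_nhds.add (hinv.const_mul R)).div (tendsto_const_nhds.add (hinv.const_mul P))
      (by simpa using hQ)
  rw [mul_zero, mul_zero, add_zero, add_zero] at hlim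
  refine hlim.congr' ?_
  filter_upwards [eventually_ne_atTop 0] with m hm
  have hm' : (m : ℝ) ≠ 0 := Nat.cast_ne_zero.mpr hm
  rw [← mul_div_mul_left _ _ hm']
  congr 1 <;> field_simp

lemma eventually_pos_natCast_mul_add {Q : ℝ} (hQ : 0 < Q) (P : ℝ) :
    ∀ᶠ m : ℕ in atTop, 0 < m * Q + P :=
  (tendsto_atTop_add_const_right _ P
    ((tendsto_natCast_atTop_atTop (R := ℝ)).atTop_mul_const hQ)).eventually_gt_atTop 0

lemma weighted_mean_lt_weighted_mean {u v u' v' c : ℝ} (hu : 0 < u) (hv : 0 < v)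
    (hu' : 0 < u') (hv' : 0 < v') (hc : 0 < c) (h : u' * v < u * v') (p : ℝ) :
    (u * p + v * (p + c)) / (u + v) < (u' * p + v' * (p + c)) / (u' + v') := by
  rw [div_lt_div_iff₀ (by positivity) (by positivity)]
  nlinarith [mul_lt_mul_of_pos_left h hc]

section Crowd

variable (m : ℕ) (p q : ℝ) {k : ℕ} (y : Fin k → ℝ)

def crowd : Fin (m + m + k) → ℝ :=
  Fin.append (Fin.append (fun _ : Fin m => p) fun _ => q) y

lemma crowd_natAdd (l : Fin k) : crowd m p q y (Fin.natAdd (m + m) l) = y l :=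
  Fin.append_right _ _ _

lemma sum_crowd (g : ℝ → ℝ) :
    ∑ r, g (crowd m p q y r) = m * (g p + g q) + ∑ r, g (y r) := by
  simp only [crowd, Fin.sum_univ_add, Fin.append_left, Fin.append_right, Finset.sum_const,
    Finset.card_univ, Fintype.card_fin, nsmul_eq_mul, mul_add]

end Crowd

section CrowdUpdate

variable (f : ℝ → ℝ) (p q : ℝ) {k : ℕ} (y : Fin k → ℝ) (l : Fin k)

lemma sum_crowd_sub_natAdd (m : ℕ) :
    ∑ r, f (crowd m p q y r - crowd m p q y (Fin.natAdd (m + m) l)) =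
      m * (f (p - y l) + f (q - y l)) + ∑ r, f (y r - y l) := by
  rw [crowd_natAdd, sum_crowd m p q y (fun z => f (z - y l))]

lemma eventually_pos_sum_crowd_sub_natAdd (hpq : 0 < f (p - y l) + f (q - y l)) :
    ∀ᶠ m : ℕ in atTop,
      0 < ∑ r, f (crowd m p q y r - crowd m p q y (Fin.natAdd (m + m) l)) := by
  simpa only [sum_crowd_sub_natAdd] using eventually_pos_natCast_mul_add hpq _

lemma tendsto_krauseUpdate_crowd (hpq : f (p - y l) + f (q - y l) ≠ 0) :
    Tendsto (fun m : ℕ => krauseUpdate f (crowd m p q y) (Fin.natAdd (m + m) l)) atTop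
      (𝓝 ((f (p - y l) * p + f (q - y l) * q) / (f (p - y l) + f (q - y l)))) := by
  have hnum (m : ℕ) :
      ∑ r, f (crowd m p q y r - crowd m p q y (Fin.natAdd (m + m) l)) * crowd m p q y r =
        m * (f (p - y l) * p + f (q - y l) * q) + ∑ r, f (y r - y l) * y r := by
    rw [crowd_natAdd, sum_crowd m p q y (fun z => f (z - y l) * z)]
  simpa only [krauseUpdate, hnum, sum_crowd_sub_natAdd] using
    tendsto_natCast_mul_add_div_natCast_mul_add hpq _ _ _

end CrowdUpdate

theorem krause_not_order_preserving_general
    (f : ℝ → ℝ)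
    (a b c : ℝ) (hab : a ≤ b) (hc : 0 < c)
    (ha : 0 < f a) (hb : 0 < f b) (hac : 0 < f (a + c)) (hbc : 0 < f (b + c))
    (hviol : f b / f (b + c) < f a / f (a + c)) :
    ∃ (n : ℕ) (x : Fin n → ℝ) (i j : Fin n), x i ≤ x j ∧
      (0 < ∑ k, f (x k - x i)) ∧ (0 < ∑ k, f (x k - x j)) ∧
      (∑ k, f (x k - x j) * x k) / (∑ k, f (x k - x j)) <
        (∑ k, f (x k - x i) * x k) / (∑ k, f (x k - x i)) := by
  let y : Fin 2 → ℝ := ![0, b - a]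
  have hy₀ : ∀ z, z - y 0 = z := fun z => sub_zero z
  have hy₁ : b - y 1 = a ∧ b + c - y 1 = a + c := ⟨by simp [y], by simp [y]; ring⟩
  have hpos₀ : 0 < f (b - y 0) + f (b + c - y 0) := by rw [hy₀, hy₀]; positivity
  have hpos₁ : 0 < f (b - y 1) + f (b + c - y 1) := by rw [hy₁.1, hy₁.2]; positivity
  have hlim_lt : (f (b - y 1) * b + f (b + c - y 1) * (b + c)) / (f (b - y 1) + f (b + c - y 1)) <
      (f (b - y 0) * b + f (b + c - y 0) * (b + c)) / (f (b - y 0) + f (b + c - y 0)) := by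
    rw [hy₀, hy₀, hy₁.1, hy₁.2]
    exact weighted_mean_lt_weighted_mean ha hac hb hbc hc
      ((div_lt_div_iff₀ hbc hac).mp hviol) b
  obtain ⟨m, hden₀, hden₁, hcross⟩ :=
    ((eventually_pos_sum_crowd_sub_natAdd f b (b + c) y 0 hpos₀).and
      ((eventually_pos_sum_crowd_sub_natAdd f b (b + c) y 1 hpos₁).and
        ((tendsto_krauseUpdate_crowd f b (b + c) y 1 hpos₁.ne').eventually_lt
          (tendsto_krauseUpdate_crowd f b (b + c) y 0 hpos₀.ne') hlim_lt))).exists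
  refine ⟨_, crowd m b (b + c) y, Fin.natAdd _ 0, Fin.natAdd _ 1, ?_, hden₀, hden₁, hcross⟩
  simpa [crowd_natAdd, y] using hab

/-- If the ratio condition is strictly violated somewhere, then the influence
function is not order preserving: some configuration has crossing opinions. -/
theorem krause_not_order_preserving
    (f : ℝ → ℝ) (hf : ∀ y, 0 ≤ f y)
    (hord : Set.OrdConnected {y | 0 < f y}) (h0 : 0 < f 0)
    (hlen : ∃ y, y ≠ 0 ∧ 0 < f y)
    (a b c : ℝ) (hab : a ≤ b) (hc : 0 < c)
    (ha : 0 < f a) (hb : 0 < f b) (hac : 0 < f (a + c)) (hbc : 0 < f (b + c))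
    (hviol : f b / f (b + c) < f a / f (a + c)) :
    ∃ (n : ℕ) (x : Fin n → ℝ) (i j : Fin n), x i ≤ x j ∧
      (0 < ∑ k, f (x k - x i)) ∧ (0 < ∑ k, f (x k - x j)) ∧
      (∑ k, f (x k - x j) * x k) / (∑ k, f (x k - x j)) <
        (∑ k, f (x k - x i) * x k) / (∑ k, f (x k - x i)) :=
  krause_not_order_preserving_general f a b c hab hc ha hb hac hbc hviol
end

section
/- Let f : ℝ → ℝ be a nonnegative function whose support S is an interval, continuous on S, satisfying the ratio condition f(a+c)*f(b) ≥ f(b+c)*f(a) for all a ≤ b, c ≥ 0 with all four values positive. Then log f is concave on S. -/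
/-!
Taking `a = u`, `b = (u + v) / 2`, `c = (v - u) / 2` in the ratio condition gives
`f u * f v ≤ f ((u + v) / 2) ^ 2`, so `log f` is midpoint concave on the support. Repeated
midpoints give the concavity inequality at all dyadic weights `k / 2 ^ n`, and continuity of
`log f` on the support extends it to all weights in `[0, 1]`.
-/

open Set Filter Topology AffineMap

theorem midpoint_real_eq (c d : ℝ) : midpoint ℝ c d = (c + d) / 2 := by
  rw [midpoint_eq_smul_add, smul_eq_mul, invOf_eq_inv]; ring

theorem div_two_pow_mem_of_midpoint_mem {T : Set ℝ} (h0 : 0 ∈ T) (h1 : 1 ∈ T)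
    (hmid : ∀ a ∈ T, ∀ b ∈ T, (a + b) / 2 ∈ T) :
    ∀ n k : ℕ, k ≤ 2 ^ n → (k : ℝ) / 2 ^ n ∈ T
  | 0, k, hk => by interval_cases k <;> simpa
  | n + 1, k, hk => by
    rcases le_or_gt k (2 ^ n) with hle | hgt
    · convert hmid 0 h0 _ (div_two_pow_mem_of_midpoint_mem h0 h1 hmid n k hle) using 1
      rw [pow_succ]; ring
    · obtain ⟨j, rfl⟩ := Nat.exists_eq_add_of_le hgt.le
      convert hmid _ (div_two_pow_mem_of_midpoint_mem h0 h1 hmid n j (by omega)) 1 h1 using 1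
      push_cast; field_simp; ring

theorem Icc_subset_of_isClosed_of_midpoint_mem {T : Set ℝ} (hT : IsClosed T) (h0 : 0 ∈ T)
    (h1 : 1 ∈ T) (hmid : ∀ a ∈ T, ∀ b ∈ T, (a + b) / 2 ∈ T) : Icc 0 1 ⊆ T := by
  rintro l ⟨hl0, hl1⟩
  have hlim : Tendsto (fun n : ℕ => (⌊l * 2 ^ n⌋₊ : ℝ) / 2 ^ n) atTop (𝓝 l) :=
    (tendsto_nat_floor_mul_div_atTop hl0).comp (tendsto_pow_atTop_atTop_of_one_lt one_lt_two)
  refine hT.mem_of_tendsto hlim (Eventually.of_forall fun n => ?_)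
  refine div_two_pow_mem_of_midpoint_mem h0 h1 hmid n _ (Nat.floor_le_of_le ?_)
  push_cast
  exact mul_le_of_le_one_left (by positivity) hl1

theorem concaveOn_of_midpoint {E : Type*} [AddCommGroup E] [Module ℝ E] [TopologicalSpace E]
    [IsTopologicalAddGroup E] [ContinuousSMul ℝ E] {s : Set E} {g : E → ℝ} (hs : Convex ℝ s)
    (hg : ContinuousOn g s) (hmid : ∀ u ∈ s, ∀ v ∈ s, (g u + g v) / 2 ≤ g (midpoint ℝ u v)) :
    ConcaveOn ℝ s g := by
  refine ⟨hs, fun x hx y hy a b ha hb hab => ?_⟩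
  have hline : ∀ t ∈ Icc (0 : ℝ) 1, lineMap x y t ∈ s := fun t ht => hs.lineMap_mem hx hy ht
  set T := {t ∈ Icc (0 : ℝ) 1 | lineMap (g x) (g y) t ≤ g (lineMap x y t)}
  have hT : IsClosed T := isClosed_Icc.isClosed_le lineMap_continuous.continuousOn
    (hg.comp lineMap_continuous.continuousOn hline)
  have hTmid : ∀ c ∈ T, ∀ d ∈ T, (c + d) / 2 ∈ T := by
    rintro c ⟨hc, hgc⟩ d ⟨hd, hgd⟩
    rw [← midpoint_real_eq]
    refine ⟨(convex_Icc 0 1).midpoint_mem hc hd, ?_⟩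
    calc lineMap (g x) (g y) (midpoint ℝ c d)
        = (lineMap (g x) (g y) c + lineMap (g x) (g y) d) / 2 := by
          rw [map_midpoint, midpoint_real_eq]
      _ ≤ (g (lineMap x y c) + g (lineMap x y d)) / 2 := by linarith
      _ ≤ g (midpoint ℝ (lineMap x y c) (lineMap x y d)) :=
          hmid _ (hline c hc) _ (hline d hd)
      _ = g (lineMap x y (midpoint ℝ c d)) := by rw [map_midpoint]
  have h0 : (0 : ℝ) ∈ T := ⟨left_mem_Icc.2 zero_le_one, by simp⟩
  have h1 : (1 : ℝ) ∈ T := ⟨right_mem_Icc.2 zero_le_one, by simp⟩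
  obtain rfl : a = 1 - b := by linarith
  simpa [lineMap_apply_module] using
    (Icc_subset_of_isClosed_of_midpoint_mem hT h0 h1 hTmid ⟨hb, by linarith⟩).2

def RatioCondition (f : ℝ → ℝ) : Prop :=
  ∀ a b c : ℝ, a ≤ b → 0 ≤ c → 0 < f a → 0 < f b →
    0 < f (a + c) → 0 < f (b + c) → f (b + c) * f a ≤ f (a + c) * f b

theorem RatioCondition.mul_le_sq_midpoint {f : ℝ → ℝ} (hf : RatioCondition f) {u v : ℝ}
    (huv : u ≤ v) (hu : 0 < f u) (hv : 0 < f v) (hm : 0 < f ((u + v) / 2)) :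
    f u * f v ≤ f ((u + v) / 2) ^ 2 := by
  have h := hf u ((u + v) / 2) ((u + v) / 2 - u) (by linarith) (by linarith) hu hm
  rw [add_sub_cancel, show (u + v) / 2 + ((u + v) / 2 - u) = v by ring] at h
  nlinarith [h hm hv]

theorem RatioCondition.log_midpoint_concave {f : ℝ → ℝ} (hf : RatioCondition f)
    (hord : OrdConnected {y | 0 < f y}) {u v : ℝ} (hu : 0 < f u) (hv : 0 < f v) :
    (Real.log (f u) + Real.log (f v)) / 2 ≤ Real.log (f (midpoint ℝ u v)) := by
  wlog huv : u ≤ v generalizing u v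
  · simpa only [add_comm, midpoint_comm] using this hv hu (le_of_not_ge huv)
  have hm : 0 < f ((u + v) / 2) := hord.out hu hv ⟨by linarith, by linarith⟩
  have h := Real.log_le_log (by positivity) (hf.mul_le_sq_midpoint huv hu hv hm)
  rw [Real.log_mul hu.ne' hv.ne', Real.log_pow] at h
  rw [midpoint_real_eq]
  push_cast at h
  linarith

theorem ratio_condition_log_concave_general
    (f : ℝ → ℝ)
    (hord : Set.OrdConnected {y | 0 < f y})
    (hcont : ContinuousOn f {y | 0 < f y})
    (hratio : ∀ a b c : ℝ, a ≤ b → 0 ≤ c → 0 < f a → 0 < f b →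
      0 < f (a + c) → 0 < f (b + c) → f (b + c) * f a ≤ f (a + c) * f b)
    (x y l : ℝ) (hx : 0 < f x) (hy : 0 < f y) (hl0 : 0 ≤ l) (hl1 : l ≤ 1) :
    (1 - l) * Real.log (f x) + l * Real.log (f y) ≤
      Real.log (f ((1 - l) * x + l * y)) := by
  have hconc : ConcaveOn ℝ {y | 0 < f y} (fun t => Real.log (f t)) :=
    concaveOn_of_midpoint hord.convex (hcont.log fun _ ht => ht.ne')
      fun _ hu _ hv => RatioCondition.log_midpoint_concave hratio hord hu hv
  simpa only [smul_eq_mul] using hconc.2 hx hy (by linarith) hl0 (by ring)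

/-- A continuous influence function (on its interval support) satisfying the
ratio condition has a concave logarithm on its support. -/
theorem ratio_condition_log_concave
    (f : ℝ → ℝ) (hf : ∀ y, 0 ≤ f y)
    (hord : Set.OrdConnected {y | 0 < f y})
    (hcont : ContinuousOn f {y | 0 < f y})
    (hratio : ∀ a b c : ℝ, a ≤ b → 0 ≤ c → 0 < f a → 0 < f b →
      0 < f (a + c) → 0 < f (b + c) → f (b + c) * f a ≤ f (a + c) * f b)
    (x y l : ℝ) (hx : 0 < f x) (hy : 0 < f y) (hl0 : 0 ≤ l) (hl1 : l ≤ 1) :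
    (1 - l) * Real.log (f x) + l * Real.log (f y) ≤
      Real.log (f ((1 - l) * x + l * y)) :=
  ratio_condition_log_concave_general f hord hcont hratio x y l hx hy hl0 hl1
end

section
/- The function f(x) = cos(x) for |x| ≤ π/2 and f(x) = 0 otherwise satisfies the order-preservation condition: for all a ≤ b and c ≥ 0 with f(a), f(b), f(a+c), f(b+c) all positive, f(a+c)*f(b) ≥ f(b+c)*f(a). -/
/-- The truncated cosine influence function satisfies the ratio condition. -/
theorem cos_ratio_condition :
    let f : ℝ → ℝ := fun x => if |x| ≤ Real.pi / 2 then Real.cos x else 0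
    ∀ a b c : ℝ, a ≤ b → 0 ≤ c →
      0 < f a → 0 < f b → 0 < f (a + c) → 0 < f (b + c) →
      f (b + c) * f a ≤ f (a + c) * f b := by
  intro f a b c hab hc ha hb hac hbc
  have Ha : |a| ≤ Real.pi / 2 := by
    by_contra h; simp only [f, if_neg h] at ha; exact lt_irrefl 0 ha
  have Hb : |b| ≤ Real.pi / 2 := by
    by_contra h; simp only [f, if_neg h] at hb; exact lt_irrefl 0 hb
  have Hac : |a + c| ≤ Real.pi / 2 := by
    by_contra h; simp only [f, if_neg h] at hac; exact lt_irrefl 0 hac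
  have Hbc : |b + c| ≤ Real.pi / 2 := by
    by_contra h; simp only [f, if_neg h] at hbc; exact lt_irrefl 0 hbc
  simp only [f, if_pos Ha, if_pos Hb, if_pos Hac, if_pos Hbc]
  have key : Real.cos (a + c) * Real.cos b - Real.cos (b + c) * Real.cos a
      = Real.sin c * Real.sin (b - a) := by
    rw [Real.cos_add, Real.cos_add, Real.sin_sub]; ring
  obtain ⟨ha1, ha2⟩ := abs_le.mp Ha
  obtain ⟨hb1, hb2⟩ := abs_le.mp Hb
  obtain ⟨hac1, hac2⟩ := abs_le.mp Hac
  obtain ⟨hbc1, hbc2⟩ := abs_le.mp Hbc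
  have hs1 : 0 ≤ Real.sin c :=
    Real.sin_nonneg_of_nonneg_of_le_pi hc (by linarith)
  have hs2 : 0 ≤ Real.sin (b - a) :=
    Real.sin_nonneg_of_nonneg_of_le_pi (by linarith) (by linarith)
  nlinarith [mul_nonneg hs1 hs2]
end

section
/- Let f : ℝ → ℝ be nonnegative with support S an interval, satisfying the ratio condition f(a+c)*f(b) ≥ f(b+c)*f(a) for all a ≤ b, c ≥ 0 with all four values positive. Suppose x₀ lies in the interior of S and Δ(x) := (log f(x) − log f(x₀))/(x − x₀) takes arbitrarily large positive values on every open interval around x₀. Then for any interval I ⊆ S of positive length with sup I < x₀, log f is unbounded below on I. -/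
set_option maxHeartbeats 1000000 in
/-- If the difference-quotient of `log f` at an interior point `x₀` of the
support takes arbitrarily large positive values on every neighborhood of `x₀`,
then `log f` is unbounded below on every positive-length interval of the
support lying below `x₀`. -/
theorem ratio_condition_unbounded_below
    (f : ℝ → ℝ) (hf : ∀ y, 0 ≤ f y)
    (hord : Set.OrdConnected {y | 0 < f y})
    (hratio : ∀ a b c : ℝ, a ≤ b → 0 ≤ c → 0 < f a → 0 < f b →
      0 < f (a + c) → 0 < f (b + c) → f (b + c) * f a ≤ f (a + c) * f b)
    (x₀ : ℝ) (hx₀ : x₀ ∈ interior {y | 0 < f y})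
    (hΔ : ∀ ε > (0 : ℝ), ∀ M : ℝ, ∃ x, |x - x₀| < ε ∧ x ≠ x₀ ∧ 0 < f x ∧
      M < (Real.log (f x) - Real.log (f x₀)) / (x - x₀))
    (u v : ℝ) (huv : u < v) (hI : Set.Icc u v ⊆ {y | 0 < f y}) (hv : v < x₀) :
    ∀ M : ℝ, ∃ y ∈ Set.Icc u v, Real.log (f y) < -M := by
  intro M
  have hx₀mem : (0:ℝ) < f x₀ := by
    have := interior_subset (s := {y | 0 < f y}) hx₀
    exact this
  have hu : 0 < f u := hI ⟨le_refl u, le_of_lt huv⟩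
  have hsupp : ∀ z, u ≤ z → z ≤ x₀ → 0 < f z := fun z h1 h2 =>
    hord.out hu hx₀mem ⟨h1, h2⟩
  set ε := min (v - u) (x₀ - v) with hε_def
  have hε : 0 < ε := lt_min (by linarith) (by linarith)
  have hε1 : ε ≤ v - u := min_le_left _ _
  have hε2 : ε ≤ x₀ - v := min_le_right _ _
  clear_value ε
  set L := Real.log (f x₀) with hL_def
  clear_value L
  obtain ⟨x, hxε, hxne, hfx, hxD⟩ :=
    hΔ ε hε (max 1 ((M + L + 1) / (x₀ - v)))
  set D := (Real.log (f x) - L) / (x - x₀) with hD_def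
  have hD1 : (1:ℝ) < D := lt_of_le_of_lt (le_max_left _ _) hxD
  have hD0 : 0 < D := by linarith
  have hDM : (M + L + 1) / (x₀ - v) < D := lt_of_le_of_lt (le_max_right _ _) hxD
  have hlogx : D * (x - x₀) = Real.log (f x) - L := by
    rw [hD_def]; exact div_mul_cancel₀ _ (sub_ne_zero.mpr hxne)
  clear_value D
  set h := |x - x₀| with hh_def
  have hh0 : 0 < h := abs_pos.mpr (sub_ne_zero.mpr hxne)
  have hhε : h < ε := hxε
  -- q = min x x₀, p = max x x₀
  obtain ⟨q, hpq, hqx₀, hqlb, hfq, hlogq, hlogp⟩ :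
      ∃ q : ℝ, q + h = max x x₀ ∧ q ≤ x₀ ∧ x₀ - h ≤ q ∧ 0 < f q ∧
        Real.log (f q) = L - (x₀ - q) * D ∧
        Real.log (f (q + h)) = Real.log (f q) + h * D := by
    rcases le_or_gt x x₀ with hc | hc
    · refine ⟨x, ?_, hc, ?_, hfx, ?_, ?_⟩
      · rw [max_eq_right hc, hh_def, abs_of_nonpos (by linarith)]; ring
      · rw [hh_def, abs_of_nonpos (by linarith)]; linarith
      · linear_combination -hlogx
      · have hxh : x + h = x₀ := by
          rw [hh_def, abs_of_nonpos (by linarith)]; ring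
        rw [hxh, hh_def, abs_of_nonpos (by linarith)]
        linear_combination hlogx - hL_def
    · refine ⟨x₀, ?_, le_refl _, by linarith [abs_nonneg (x - x₀)], hx₀mem,
        by rw [hL_def]; ring, ?_⟩
      · rw [max_eq_left hc.le, hh_def, abs_of_pos (by linarith)]; ring
      · have hxh : x₀ + h = x := by
          rw [hh_def, abs_of_pos (by linarith)]; ring
        rw [hxh, hh_def, abs_of_pos (by linarith)]
        linear_combination -hlogx + hL_def
  have hfp : 0 < f (q + h) := by
    rw [hpq]; rcases le_or_gt x x₀ with hc | hc
    · rw [max_eq_right hc]; exact hx₀mem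
    · rw [max_eq_left hc.le]; exact hfx
  -- q is strictly above v
  have hqv : v < q := by linarith
  -- number of steps
  set k := ⌈(q - v) / h⌉₊ with hk_def
  have hk1 : q - v ≤ k * h := by
    have := Nat.le_ceil ((q - v) / h)
    calc q - v = (q - v) / h * h := by field_simp [hh0.ne']
    _ ≤ k * h := by
          exact mul_le_mul_of_nonneg_right this hh0.le
  have hk2 : (k : ℝ) * h < q - v + h := by
    have h0 : (0:ℝ) ≤ (q - v) / h := div_nonneg (by linarith) hh0.le
    have := Nat.ceil_lt_add_one h0
    calc (k:ℝ) * h < ((q - v)/h + 1) * h := by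
            exact mul_lt_mul_of_pos_right this hh0
      _ = q - v + h := by field_simp [hh0.ne']
  -- the target point
  set y := q - k * h with hy_def
  have hyv : y ≤ v := by simp only [hy_def]; linarith
  have hyu : u < y := by simp only [hy_def]; linarith
  -- positivity along the chain
  have hpos : ∀ j : ℕ, j ≤ k → 0 < f (q - j * h) := by
    intro j hj
    apply hsupp
    · have : (j : ℝ) * h ≤ k * h :=
        mul_le_mul_of_nonneg_right (Nat.cast_le.mpr hj) hh0.le
      linarith
    · have : (0:ℝ) ≤ (j:ℝ) * h := mul_nonneg (Nat.cast_nonneg _) hh0.le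
      linarith
  -- telescoping
  have key : ∀ j : ℕ, j ≤ k →
      Real.log (f (q - j * h)) ≤ Real.log (f q) - j * (h * D) := by
    intro j
    induction j with
    | zero => intro _; simp
    | succ n ih =>
      intro hn
      have hn' : n ≤ k := Nat.le_of_succ_le hn
      have ihn := ih hn'
      have ha : 0 < f (q - (n + 1 : ℕ) * h) := hpos _ hn
      have hac : 0 < f (q - (n + 1 : ℕ) * h + h) := by
        have : q - (n + 1 : ℕ) * h + h = q - n * h := by push_cast; ring
        rw [this]; exact hpos _ hn'
      have hr := hratio (q - (n + 1 : ℕ) * h) q h (by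
          have : (0:ℝ) ≤ ((n:ℝ) + 1) * h := by positivity
          push_cast; linarith) hh0.le ha hfq hac hfp
      have heq : q - (n + 1 : ℕ) * h + h = q - n * h := by push_cast; ring
      rw [heq] at hac hr
      have hlog := Real.log_le_log (by positivity) hr
      rw [Real.log_mul (ne_of_gt hfp) (ne_of_gt ha),
        Real.log_mul (ne_of_gt (hpos _ hn')) (ne_of_gt hfq), hlogp] at hlog
      push_cast
      push_cast at ihn hlog
      linarith
  have hky := key k (le_refl k)
  rw [← hy_def] at hky
  -- final bound
  refine ⟨y, ⟨hyu.le, hyv⟩, ?_⟩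
  have hxy : x₀ - v ≤ x₀ - y := by linarith
  have h1 : Real.log (f y) ≤ L - (x₀ - y) * D := by
    have : (x₀ - y) * D = (x₀ - q) * D + k * (h * D) := by
      simp only [hy_def]; ring
    rw [this]; rw [hlogq] at hky; linarith
  have h2 : (x₀ - v) * D ≤ (x₀ - y) * D :=
    mul_le_mul_of_nonneg_right hxy hD0.le
  have h3 : M + L + 1 < D * (x₀ - v) := (div_lt_iff₀ (by linarith)).mp hDM
  nlinarith
end

section
/- Let f : ℝ → ℝ be nonnegative with support S an interval of positive length, and suppose f satisfies the ratio condition (for all a ≤ b, c ≥ 0 with all four values positive, f(a+c)*f(b) ≥ f(b+c)*f(a)) and f admits a positive lower bound on some positive-length subinterval of S. Then f is continuous at every interior point of S. -/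
lemma rc_mem_between {f : ℝ → ℝ} (hord : Set.OrdConnected {y | 0 < f y})
    {a b : ℝ} (ha : 0 < f a) (hb : 0 < f b) {t : ℝ} (ht0 : 0 ≤ t) (ht1 : t ≤ 1) :
    0 < f (a + (b - a) * t) := by
  rcases le_total a b with h | h
  · exact hord.out ha hb ⟨by nlinarith, by nlinarith⟩
  · exact hord.out hb ha ⟨by nlinarith, by nlinarith⟩

lemma rc_midpt {f : ℝ → ℝ}
    (hratio : ∀ a b c : ℝ, a ≤ b → 0 ≤ c → 0 < f a → 0 < f b →
      0 < f (a + c) → 0 < f (b + c) → f (b + c) * f a ≤ f (a + c) * f b)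
    {x y : ℝ} (hx : 0 < f x) (hy : 0 < f y) (hm : 0 < f ((x + y) / 2)) :
    f x * f y ≤ f ((x + y) / 2) * f ((x + y) / 2) := by
  rcases le_total x y with h | h
  · have e1 : x + (y - x) / 2 = (x + y) / 2 := by ring
    have e2 : (x + y) / 2 + (y - x) / 2 = y := by ring
    have := hratio x ((x + y) / 2) ((y - x) / 2) (by linarith) (by linarith) hx hm
      (by rwa [e1]) (by rwa [e2])
    rw [e1, e2] at this
    nlinarith
  · have e0 : (x + y) / 2 = (y + x) / 2 := by ring
    rw [e0] at hm ⊢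
    have e1 : y + (x - y) / 2 = (y + x) / 2 := by ring
    have e2 : (y + x) / 2 + (x - y) / 2 = x := by ring
    have := hratio y ((y + x) / 2) ((x - y) / 2) (by linarith) (by linarith) hy hm
      (by rwa [e1]) (by rwa [e2])
    rw [e1, e2] at this
    nlinarith

lemma rc_logmid {f : ℝ → ℝ}
    (hratio : ∀ a b c : ℝ, a ≤ b → 0 ≤ c → 0 < f a → 0 < f b →
      0 < f (a + c) → 0 < f (b + c) → f (b + c) * f a ≤ f (a + c) * f b)
    {x y : ℝ} (hx : 0 < f x) (hy : 0 < f y) (hm : 0 < f ((x + y) / 2)) :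
    Real.log (f x) + Real.log (f y) ≤ 2 * Real.log (f ((x + y) / 2)) := by
  have h1 := rc_midpt hratio hx hy hm
  have h2 := Real.log_le_log (mul_pos hx hy) h1
  rw [Real.log_mul hx.ne' hy.ne', Real.log_mul hm.ne' hm.ne'] at h2
  linarith

lemma rc_iter {f : ℝ → ℝ} (hord : Set.OrdConnected {y | 0 < f y})
    (hratio : ∀ a b c : ℝ, a ≤ b → 0 ≤ c → 0 < f a → 0 < f b →
      0 < f (a + c) → 0 < f (b + c) → f (b + c) * f a ≤ f (a + c) * f b) :
    ∀ n : ℕ, ∀ a b : ℝ, 0 < f a → 0 < f b →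
      Real.log (f a) + ((1:ℝ)/2)^n * (Real.log (f b) - Real.log (f a))
        ≤ Real.log (f (a + (b - a) * ((1:ℝ)/2)^n)) := by
  intro n
  induction n with
  | zero => intro a b ha hb; simp
  | succ n ih =>
    intro a b ha hb
    have ht0 : (0:ℝ) ≤ ((1:ℝ)/2)^n := by positivity
    have ht1 : ((1:ℝ)/2)^n ≤ 1 := pow_le_one₀ (by norm_num) (by norm_num)
    have hc : 0 < f (a + (b - a) * ((1:ℝ)/2)^n) :=
      rc_mem_between hord ha hb ht0 ht1
    have hpt : a + (b - a) * ((1:ℝ)/2)^(n+1) = (a + (a + (b - a) * ((1:ℝ)/2)^n)) / 2 := by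
      rw [pow_succ]; ring
    have hm : 0 < f (a + (b - a) * ((1:ℝ)/2)^(n+1)) :=
      rc_mem_between hord ha hb (by positivity) (pow_le_one₀ (by norm_num) (by norm_num))
    rw [hpt] at hm
    have key := rc_logmid hratio ha hc hm
    have ihab := ih a b ha hb
    rw [hpt]
    have hps : ((1:ℝ)/2)^(n+1) = ((1:ℝ)/2)^n / 2 := by rw [pow_succ]; ring
    rw [hps]
    linarith

set_option maxHeartbeats 2000000 in
/-- An influence function satisfying the ratio condition and admitting a
positive lower bound on some positive-length subinterval of its support is
continuous at every interior point of its support. -/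
theorem ratio_condition_continuous
    (f : ℝ → ℝ) (hf : ∀ y, 0 ≤ f y)
    (hord : Set.OrdConnected {y | 0 < f y})
    (hlen : ∃ u v : ℝ, u < v ∧ Set.Icc u v ⊆ {y | 0 < f y})
    (hratio : ∀ a b c : ℝ, a ≤ b → 0 ≤ c → 0 < f a → 0 < f b →
      0 < f (a + c) → 0 < f (b + c) → f (b + c) * f a ≤ f (a + c) * f b)
    (hlb : ∃ u v m : ℝ, u < v ∧ 0 < m ∧ Set.Icc u v ⊆ {y | 0 < f y} ∧
      ∀ y ∈ Set.Icc u v, m ≤ f y) :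
    ∀ x ∈ interior {y | 0 < f y}, ContinuousAt f x := by
  intro x0 hx0
  obtain ⟨u, v, m, huv, hmpos, hsub, hbd⟩ := hlb
  obtain ⟨ε, hε, hballS⟩ := Metric.mem_nhds_iff.mp (mem_interior_iff_mem_nhds.mp hx0)
  set r := ε / 2 with hrdef
  have hr0 : 0 < r := by positivity
  have hball : ∀ y : ℝ, |y - x0| ≤ r → 0 < f y := by
    intro y hy
    have hym : y ∈ Metric.ball x0 ε := by
      rw [Metric.mem_ball, Real.dist_eq]; linarith
    exact hballS hym
  set g : ℝ → ℝ := fun y => Real.log (f y) with hg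
  set c0 := (u + v) / 2 with hc0
  set ρ := (v - u) / 2 with hρdef
  have hρ : 0 < ρ := by rw [hρdef]; linarith
  set D := |x0 - c0| with hD
  have hD0 : 0 ≤ D := abs_nonneg _
  have hεs : (0:ℝ) < min (1/2) (r / (2 * (D + 1))) := by positivity
  obtain ⟨n, hn⟩ := exists_pow_lt_of_lt_one hεs (by norm_num : ((1:ℝ)/2) < 1)
  set t := ((1:ℝ)/2)^n with htdef
  have ht0 : (0:ℝ) < t := by positivity
  have ht2 : t < 1/2 := lt_of_lt_of_le hn (min_le_left _ _)
  have htr : t * (2 * (D + 1)) < r := by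
    have h1 : t < r / (2 * (D + 1)) := lt_of_lt_of_le hn (min_le_right _ _)
    have h2 : (0:ℝ) < 2 * (D + 1) := by positivity
    calc t * (2 * (D + 1)) < r / (2 * (D + 1)) * (2 * (D + 1)) := by
          exact mul_lt_mul_of_pos_right h1 h2
      _ = r := by field_simp
  have h1t : (0:ℝ) < 1 - t := by linarith
  set a := x0 + t * (x0 - c0) / (1 - t) with hadef
  have hid : (1 - t) * a + t * c0 = x0 := by
    rw [hadef]; field_simp; ring
  have har : |a - x0| ≤ r := by
    have : a - x0 = t * (x0 - c0) / (1 - t) := by rw [hadef]; ring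
    rw [this, abs_div, abs_mul, abs_of_pos ht0, abs_of_pos h1t, div_le_iff₀ h1t]
    nlinarith
  have haS : 0 < f a := hball a har
  set δ := min (t * ρ) r with hδdef
  have hδ0 : 0 < δ := lt_min (by positivity) hr0
  have hδr : δ ≤ r := min_le_right _ _
  have hballδ : ∀ y : ℝ, |y - x0| ≤ δ → 0 < f y := fun y hy => hball y (le_trans hy hδr)
  set L1 := min (g a) (Real.log m) with hL1
  have hlow : ∀ y : ℝ, |y - x0| ≤ δ → L1 ≤ g y := by
    intro y hy
    set b := c0 + (y - x0) / t with hbdef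
    have hby : a + (b - a) * t = y := by
      have : a + (b - a) * t = (1 - t) * a + t * c0 + (y - x0) := by
        rw [hbdef]; field_simp; ring
      rw [this, hid]; ring
    have hbc : |b - c0| ≤ ρ := by
      have e : b - c0 = (y - x0) / t := by rw [hbdef]; ring
      rw [e, abs_div, abs_of_pos ht0, div_le_iff₀ ht0]
      have := le_trans hy (min_le_left (t * ρ) r)
      linarith
    have hbuv : b ∈ Set.Icc u v := by
      rw [abs_le] at hbc
      constructor
      · have : u = c0 - ρ := by rw [hc0, hρdef]; ring
        linarith [hbc.1]
      · have : v = c0 + ρ := by rw [hc0, hρdef]; ring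
        linarith [hbc.2]
    have hfb : 0 < f b := hsub hbuv
    have hgb : Real.log m ≤ g b := Real.log_le_log hmpos (hbd b hbuv)
    have hiter := rc_iter hord hratio n a b haS hfb
    rw [hby] at hiter
    have e1 : L1 ≤ g a := min_le_left _ _
    have e2 : L1 ≤ g b := le_trans (min_le_right _ _) hgb
    nlinarith [mul_nonneg (le_of_lt ht0) (by linarith : (0:ℝ) ≤ g b - L1),
      mul_nonneg (by linarith : (0:ℝ) ≤ 1 - t) (by linarith : (0:ℝ) ≤ g a - L1)]
  have hx0δ : |x0 - x0| ≤ δ := by rw [sub_self, abs_zero]; exact hδ0.le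
  have hfx0 : 0 < f x0 := hballδ x0 hx0δ
  have hM1L1 : L1 ≤ g x0 := hlow x0 hx0δ
  set C := 2 * (g x0 - L1) with hC
  have hC0 : 0 ≤ C := by rw [hC]; linarith
  have hrefl : ∀ y : ℝ, |(2 * x0 - y) - x0| = |y - x0| := by
    intro y
    have : 2 * x0 - y - x0 = -(y - x0) := by ring
    rw [this, abs_neg]
  have hmid2 : ∀ y : ℝ, |y - x0| ≤ δ → g y + g (2 * x0 - y) ≤ 2 * g x0 := by
    intro y hy
    have hy' : |(2 * x0 - y) - x0| ≤ δ := by rw [hrefl]; exact hy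
    have hfy : 0 < f y := hballδ y hy
    have hfy' : 0 < f (2 * x0 - y) := hballδ _ hy'
    have hmide : (y + (2 * x0 - y)) / 2 = x0 := by ring
    have := rc_logmid hratio hfy hfy' (by rw [hmide]; exact hfx0)
    rw [hmide] at this
    exact this
  have hlowest : ∀ k : ℕ, ∀ y : ℝ, |y - x0| ≤ ((1:ℝ)/2)^k * δ →
      g x0 - ((1:ℝ)/2)^k * C ≤ g y := by
    intro k y hy
    set s := ((1:ℝ)/2)^k with hs
    have hs0 : (0:ℝ) < s := by positivity
    have hs1 : s ≤ 1 := pow_le_one₀ (by norm_num) (by norm_num)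
    set b := x0 + (y - x0) / s with hbdef
    have hby : x0 + (b - x0) * s = y := by
      rw [hbdef]; field_simp; ring
    have hbδ : |b - x0| ≤ δ := by
      have e : b - x0 = (y - x0) / s := by rw [hbdef]; ring
      rw [e, abs_div, abs_of_pos hs0, div_le_iff₀ hs0]
      linarith
    have hfb : 0 < f b := hballδ b hbδ
    have hiter := rc_iter hord hratio k x0 b hfx0 hfb
    rw [hby] at hiter
    have h1 : L1 ≤ g b := hlow b hbδ
    have h3 : (0:ℝ) ≤ g b - g x0 + C := by
      rw [hC]; have := hM1L1; linarith
    have h4 := mul_nonneg hs0.le h3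
    have h5 : s * (g b - g x0 + C) = s * (g b - g x0) + s * C := by ring
    linarith
  have huppest : ∀ k : ℕ, ∀ y : ℝ, |y - x0| ≤ ((1:ℝ)/2)^k * δ →
      g y ≤ g x0 + ((1:ℝ)/2)^k * C := by
    intro k y hy
    have hs0 : (0:ℝ) < ((1:ℝ)/2)^k := by positivity
    have hs1 : ((1:ℝ)/2)^k ≤ 1 := pow_le_one₀ (by norm_num) (by norm_num)
    have hyδ : |y - x0| ≤ δ := hy.trans (by
      calc ((1:ℝ)/2)^k * δ ≤ 1 * δ := mul_le_mul_of_nonneg_right hs1 hδ0.le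
        _ = δ := one_mul δ)
    have hy' : |(2 * x0 - y) - x0| ≤ ((1:ℝ)/2)^k * δ := by rw [hrefl]; exact hy
    have h1 := hlowest k (2 * x0 - y) hy'
    have h2 := hmid2 y hyδ
    linarith
  have hgc : ContinuousAt g x0 := by
    rw [Metric.continuousAt_iff]
    intro ε' hε'
    have hC1 : (0:ℝ) < C + 1 := by linarith
    obtain ⟨k, hk⟩ := exists_pow_lt_of_lt_one (show (0:ℝ) < ε' / (C + 1) by positivity)
      (by norm_num : ((1:ℝ)/2) < 1)
    refine ⟨((1:ℝ)/2)^k * δ, by positivity, ?_⟩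
    intro y hy
    rw [Real.dist_eq] at hy ⊢
    have h1 := hlowest k y (le_of_lt hy)
    have h2 := huppest k y (le_of_lt hy)
    have hs0 : (0:ℝ) < ((1:ℝ)/2)^k := by positivity
    have hkC : ((1:ℝ)/2)^k * C < ε' := by
      have h6 := (lt_div_iff₀ hC1).mp hk
      have h7 := mul_le_mul_of_nonneg_left (by linarith : C ≤ C + 1) hs0.le
      linarith
    rw [abs_lt]
    constructor <;> linarith
  have hfeq : (fun y => Real.exp (g y)) =ᶠ[nhds x0] f := by
    have hmem : Metric.closedBall x0 δ ∈ nhds x0 := Metric.closedBall_mem_nhds x0 hδ0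
    filter_upwards [hmem] with y hy
    have : 0 < f y := hballδ y (by rw [← Real.dist_eq]; exact Metric.mem_closedBall.mp hy)
    exact Real.exp_log this
  exact ContinuousAt.congr (Real.continuous_exp.continuousAt.comp hgc) hfeq
end

section
/- Let f : ℝ → ℝ be a differentiable positive function on ℝ. Then f satisfies f(a+c)*f(b) ≥ f(b+c)*f(a) for all a ≤ b and c ≥ 0 if and only if the derivative of log f (i.e., f'/f) is non-increasing on ℝ. -/
/-!
With `g = log ∘ f`, the ratio condition says that the increment `g (x + c) - g x` over a step
`c ≥ 0` is non-increasing in `x`. If `g'` is non-increasing, then `c ↦ g (a + c) - g (b + c)` has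
derivative `g' (a + c) - g' (b + c) ≥ 0` for `a ≤ b`, hence is monotone. Conversely,
`c ↦ (g (a + c) - g a) - (g (b + c) - g b)` is minimal at `c = 0` on `[0, ∞)`, so its derivative
there, `g' a - g' b`, is non-negative.
-/

open Real Set

theorem mul_le_mul_iff_log_sub_le_log_sub {p q r s : ℝ} (hp : 0 < p) (hq : 0 < q) (hr : 0 < r)
    (hs : 0 < s) : p * s ≤ r * q ↔ log p - log q ≤ log r - log s := by
  rw [← log_le_log_iff (mul_pos hp hs) (mul_pos hr hq), log_mul hp.ne' hs.ne',
    log_mul hr.ne' hq.ne']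
  constructor <;> intro h <;> linarith

theorem sub_le_sub_of_antitone_deriv {g : ℝ → ℝ} (hg : Differentiable ℝ g)
    (hg' : Antitone (deriv g)) {a b c : ℝ} (hab : a ≤ b) (hc : 0 ≤ c) :
    g (b + c) - g b ≤ g (a + c) - g a := by
  have hderiv : ∀ x, HasDerivAt (fun c => g (a + c) - g (b + c))
      (deriv g (a + x) - deriv g (b + x)) x := fun x =>
    ((hg _).hasDerivAt.comp_const_add a x).sub ((hg _).hasDerivAt.comp_const_add b x)
  have hmono : Monotone fun c => g (a + c) - g (b + c) :=
    monotone_of_deriv_nonneg (fun x => (hderiv x).differentiableAt) fun x => by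
      rw [(hderiv x).deriv, sub_nonneg]
      exact hg' (add_le_add_left hab x)
  have := hmono hc
  simp only [add_zero] at this
  linarith

theorem deriv_le_deriv_of_sub_le_sub {g : ℝ → ℝ} {a b : ℝ} (ha : DifferentiableAt ℝ g a)
    (hb : DifferentiableAt ℝ g b) (h : ∀ c, 0 ≤ c → g (b + c) - g b ≤ g (a + c) - g a) :
    deriv g b ≤ deriv g a := by
  set φ : ℝ → ℝ := fun c => (g (a + c) - g a) - (g (b + c) - g b)
  have hφ : HasDerivAt φ (deriv g a - deriv g b) 0 := by
    have ha' : HasDerivAt g (deriv g a) (a + 0) := by simpa only [add_zero] using ha.hasDerivAt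
    have hb' : HasDerivAt g (deriv g b) (b + 0) := by simpa only [add_zero] using hb.hasDerivAt
    exact ((ha'.comp_const_add a 0).sub_const (g a)).sub ((hb'.comp_const_add b 0).sub_const (g b))
  have hmin : IsLocalMinOn φ (Ici 0) 0 := by
    refine IsMinOn.localize fun c (hc : 0 ≤ c) => ?_
    simp only [φ, add_zero, sub_self, mem_ofPred_eq, sub_nonneg]
    exact h c hc
  have hcone : (1 : ℝ) ∈ posTangentConeAt (Ici 0) 0 :=
    mem_posTangentConeAt_of_segment_subset (by simp [segment_eq_Icc, Icc_subset_Ici_self])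
  have := hmin.hasFDerivWithinAt_nonneg hφ.hasFDerivAt.hasFDerivWithinAt hcone
  simpa using this

/-- For a differentiable, everywhere-positive function, the ratio condition is
equivalent to the derivative of `log f` being non-increasing. -/
theorem differentiable_ratio_iff_logDeriv_antitone
    (f : ℝ → ℝ) (hf : ∀ y, 0 < f y) (hdiff : Differentiable ℝ f) :
    (∀ a b c : ℝ, a ≤ b → 0 ≤ c →
        f (b + c) * f a ≤ f (a + c) * f b) ↔
      Antitone (deriv fun x => Real.log (f x)) := by
  have hlog : Differentiable ℝ fun x => log (f x) := hdiff.log fun x => (hf x).ne'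
  simp only [mul_le_mul_iff_log_sub_le_log_sub (hf _) (hf _) (hf _) (hf _)]
  constructor
  · intro H a b hab
    exact deriv_le_deriv_of_sub_le_sub (hlog a) (hlog b) fun c hc => H a b c hab hc
  · intro H a b c hab hc
    exact sub_le_sub_of_antitone_deriv hlog H hab hc
end

section
/- Let f : ℝ → ℝ be nonnegative, satisfying the ratio condition, and let x₁ ≤ x₂ ≤ ... ≤ x_n be nonnegative reals with f(x_i − x_p) > 0 and f(x_i − x_q) > 0 for all i, where x_p ≤ x_q are two of the opinions. If for all i, f(x_i − x_p)*f(x_n − x_q) ≥ f(x_i − x_q)*f(x_n − x_p), then (∑_{i=1}^{n} f(x_i − x_q) x_i)(∑_{i=1}^{n} f(x_i − x_p)) ≥ (∑_{i=1}^{n} f(x_i − x_p) x_i)(∑_{i=1}^{n} f(x_i − x_q)). -/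
/-- The cross-multiplied inductive form of the sufficiency proof of the
order-preservation theorem. -/
theorem krause_cross_multiplied_inequality
    (f : ℝ → ℝ) (hf : ∀ y, 0 ≤ f y)
    (hratio : ∀ a b c : ℝ, a ≤ b → 0 ≤ c → 0 < f a → 0 < f b →
      0 < f (a + c) → 0 < f (b + c) → f (b + c) * f a ≤ f (a + c) * f b)
    (n : ℕ) (x : Fin (n + 1) → ℝ) (hmono : Monotone x) (hnonneg : ∀ i, 0 ≤ x i)
    (p q : Fin (n + 1)) (hpq : x p ≤ x q)
    (hp : ∀ i, 0 < f (x i - x p)) (hq : ∀ i, 0 < f (x i - x q))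
    (hdisc : ∀ i, f (x i - x q) * f (x (Fin.last n) - x p) ≤
      f (x i - x p) * f (x (Fin.last n) - x q)) :
    (∑ i, f (x i - x p) * x i) * (∑ i, f (x i - x q)) ≤
      (∑ i, f (x i - x q) * x i) * (∑ i, f (x i - x p)) := by
  have key : ∀ i j : Fin (n + 1), x i ≤ x j →
      f (x j - x p) * f (x i - x q) ≤ f (x j - x q) * f (x i - x p) := by
    intro i j hij
    have e1 : x i - x q + (x j - x i) = x j - x q := by ring
    have e2 : x i - x p + (x j - x i) = x j - x p := by ring
    have h := hratio (x i - x q) (x i - x p) (x j - x i)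
      (by linarith) (by linarith) (hq i) (hp i)
      (by rw [e1]; exact hq j) (by rw [e2]; exact hp j)
    rw [e1, e2] at h
    exact h
  set g : Fin (n + 1) → Fin (n + 1) → ℝ := fun i j =>
    f (x i - x q) * x i * f (x j - x p) - f (x i - x p) * x i * f (x j - x q) with hg
  have hterm : ∀ i j : Fin (n + 1), 0 ≤ g i j + g j i := by
    intro i j
    have hexp : g i j + g j i =
        (x i - x j) * (f (x i - x q) * f (x j - x p) - f (x i - x p) * f (x j - x q)) := by
      simp only [hg]; ring
    rw [hexp]
    rcases le_total (x i) (x j) with h | h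
    · nlinarith [mul_nonneg (sub_nonneg.mpr h) (sub_nonneg.mpr (key i j h))]
    · nlinarith [mul_nonneg (sub_nonneg.mpr h) (sub_nonneg.mpr (key j i h))]
  have hsum : 0 ≤ ∑ i, ∑ j, g i j := by
    have h2 : (0:ℝ) ≤ ∑ i, ∑ j, (g i j + g j i) := by
      apply Finset.sum_nonneg; intro i _
      apply Finset.sum_nonneg; intro j _
      exact hterm i j
    have hcomm : ∑ i, ∑ j, g j i = ∑ i, ∑ j, g i j := Finset.sum_comm
    have : ∑ i, ∑ j, (g i j + g j i) = 2 * ∑ i, ∑ j, g i j := by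
      rw [Finset.sum_congr rfl fun i _ => Finset.sum_add_distrib]
      rw [Finset.sum_add_distrib, hcomm]; ring
    linarith [this ▸ h2]
  have expand : ∑ i, ∑ j, g i j =
      (∑ i, f (x i - x q) * x i) * (∑ i, f (x i - x p)) -
        (∑ i, f (x i - x p) * x i) * (∑ i, f (x i - x q)) := by
    rw [Finset.sum_mul_sum, Finset.sum_mul_sum]
    rw [← Finset.sum_sub_distrib]
    refine Finset.sum_congr rfl fun i _ => ?_
    rw [← Finset.sum_sub_distrib]
  linarith [expand ▸ hsum]
end

section
/- Let f : ℝ → ℝ be nonnegative with support an interval, satisfying the ratio condition. Let x : Fin n → ℝ be opinions and p, q indices with x p ≤ x q. Define J_p = {i : f(x i − x p) > 0} and J_q = {i : f(x i − x q) > 0}, both nonempty. If J_p ∩ J_q = ∅, then every opinion x i with i ∈ J_q is greater than every opinion x j with j ∈ J_p, and consequently x_p' ≤ x_q' where x_r' = (∑_{i ∈ J_r} f(x i − x r) x i)/(∑_{i ∈ J_r} f(x i − x r)). -/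
/-- The disjoint-neighborhood case: if the neighbor sets of two ordered agents
are disjoint, every neighbor of the higher agent has a strictly larger opinion
than every neighbor of the lower agent, and the updated opinions are ordered. -/
theorem krause_disjoint_neighborhoods
    (f : ℝ → ℝ) (hf : ∀ y, 0 ≤ f y)
    (hord : Set.OrdConnected {y | 0 < f y}) (h0 : 0 < f 0)
    (hratio : ∀ a b c : ℝ, a ≤ b → 0 ≤ c → 0 < f a → 0 < f b →
      0 < f (a + c) → 0 < f (b + c) → f (b + c) * f a ≤ f (a + c) * f b)
    (n : ℕ) (x : Fin n → ℝ) (p q : Fin n) (hpq : x p ≤ x q)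
    (hdisj : ∀ i : Fin n, ¬(0 < f (x i - x p) ∧ 0 < f (x i - x q))) :
    (∀ i j : Fin n, 0 < f (x i - x q) → 0 < f (x j - x p) → x j < x i) ∧
      (∑ i ∈ Finset.univ.filter fun i => 0 < f (x i - x p),
            f (x i - x p) * x i) /
          (∑ i ∈ Finset.univ.filter fun i => 0 < f (x i - x p),
            f (x i - x p)) ≤
        (∑ i ∈ Finset.univ.filter fun i => 0 < f (x i - x q),
            f (x i - x q) * x i) /
          (∑ i ∈ Finset.univ.filter fun i => 0 < f (x i - x q),
            f (x i - x q)) := by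
  have key : ∀ i j : Fin n, 0 < f (x i - x q) → 0 < f (x j - x p) → x j < x i := by
    intro i j hi hj
    by_contra hle
    push_neg at hle
    -- x i ≤ x j; then x j - x q ∈ [x i - x q, x j - x p], so f (x j - x q) > 0,
    -- contradicting disjointness at j.
    have h1 : x i - x q ≤ x j - x q := by linarith
    have h2 : x j - x q ≤ x j - x p := by linarith
    have hmem : (x j - x q) ∈ {y | 0 < f y} :=
      hord.out hi hj ⟨h1, h2⟩
    exact hdisj j ⟨hj, hmem⟩
  refine ⟨key, ?_⟩
  set Sp := Finset.univ.filter fun i => 0 < f (x i - x p) with hSp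
  set Sq := Finset.univ.filter fun i => 0 < f (x i - x q) with hSq
  have hpmem : p ∈ Sp := by
    simp [hSp, sub_self, h0]
  have hqmem : q ∈ Sq := by
    simp [hSq, sub_self, h0]
  have hSqne : Sq.Nonempty := ⟨q, hqmem⟩
  set c := Sq.inf' hSqne x with hc
  have hc_le : ∀ i ∈ Sq, c ≤ x i := fun i hi => Finset.inf'_le x hi
  obtain ⟨i0, hi0, hci0⟩ := Finset.exists_mem_eq_inf' hSqne x
  have hxc : ∀ j ∈ Sp, x j ≤ c := by
    intro j hj
    have hj' : 0 < f (x j - x p) := by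
      simpa [hSp] using (Finset.mem_filter.mp hj).2
    have hi0' : 0 < f (x i0 - x q) := by
      simpa [hSq] using (Finset.mem_filter.mp hi0).2
    have := key i0 j hi0' hj'
    rw [hc, hci0]; linarith
  have hsum_p_pos : 0 < ∑ i ∈ Sp, f (x i - x p) := by
    apply Finset.sum_pos
    · intro i hi
      simpa [hSp] using (Finset.mem_filter.mp hi).2
    · exact ⟨p, hpmem⟩
  have hsum_q_pos : 0 < ∑ i ∈ Sq, f (x i - x q) := by
    apply Finset.sum_pos
    · intro i hi
      simpa [hSq] using (Finset.mem_filter.mp hi).2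
    · exact ⟨q, hqmem⟩
  have h_avg_p : (∑ i ∈ Sp, f (x i - x p) * x i) / (∑ i ∈ Sp, f (x i - x p)) ≤ c := by
    rw [div_le_iff₀ hsum_p_pos]
    calc (∑ i ∈ Sp, f (x i - x p) * x i) ≤ ∑ i ∈ Sp, f (x i - x p) * c := by
          apply Finset.sum_le_sum
          intro i hi
          exact mul_le_mul_of_nonneg_left (hxc i hi) (hf _)
      _ = c * ∑ i ∈ Sp, f (x i - x p) := by
          rw [Finset.mul_sum]; exact Finset.sum_congr rfl fun i _ => mul_comm _ _
  have h_avg_q : c ≤ (∑ i ∈ Sq, f (x i - x q) * x i) / (∑ i ∈ Sq, f (x i - x q)) := by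
    rw [le_div_iff₀ hsum_q_pos]
    calc c * ∑ i ∈ Sq, f (x i - x q) = ∑ i ∈ Sq, f (x i - x q) * c := by
          rw [Finset.mul_sum]; exact Finset.sum_congr rfl fun i _ => mul_comm _ _
      _ ≤ ∑ i ∈ Sq, f (x i - x q) * x i := by
          apply Finset.sum_le_sum
          intro i hi
          exact mul_le_mul_of_nonneg_left (hc_le i hi) (hf _)
  exact le_trans h_avg_p h_avg_q
end
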